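/- Let R be a commutative ring and let x, y ∈ R satisfy: x has additive order exactly 8, y has additive order exactly 4, ℤ·x ∩ ℤ·y = 0 (so the additive subgroup K = ℤ·x + ℤ·y is isomorphic to ℤ/8 ⊕ ℤ/4), x² = 0, y² = 2y + 2ℓx for a fixed integer ℓ, and x·y = 4εx for a fixed integer ε. Then the multiplicative subgroup 1 + K = {1 + z : z ∈ K} of the unit group Rˣ is isomorphic to ℤ/8 × ℤ/2 × ℤ/2. More precisely, (1+x)ⁿ = 1 + nx for all n (so 1 + x has multiplicative order 8), (1 + y − ℓx)² = 1 and (1 + 2y)² = 1 (so 1 + y − ℓx and 1 + 2y have multiplicative order 2), and these three elements generate 1 + K. -/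

import Mathlib

private lemma aux_pow_val {G : Type*} [Monoid G] {n : ℕ} [NeZero n] {g : G}
    (hg : orderOf g = n) (a b : ZMod n) : g ^ (a + b).val = g ^ a.val * g ^ b.val := by
  subst hg
  rw [ZMod.val_add, ← pow_add, pow_mod_orderOf]


/-- With `R`, `x`, `y` as in the hypotheses abstracting `π₀E^{h𝔾₂¹}`
(`x` of additive order 8, `y` of additive order 4, `ℤ·x ∩ ℤ·y = 0`, `x² = 0`,
`y² = 2y + 2ℓx`, `x·y = 4εx`), the multiplicative subgroup `1 + K` of `Rˣ`, where `K` is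
the additive subgroup generated by `x` and `y`, is isomorphic to `ℤ/8 × ℤ/2 × ℤ/2`.
More precisely `(1+x)ⁿ = 1 + nx` for all `n` (so `1+x` has multiplicative order 8),
`(1 + y − ℓx)² = 1` and `(1 + 2y)² = 1` (so these elements have multiplicative order 2),
and these three elements generate `1 + K`. -/
theorem stmt_1 {R : Type*} [CommRing R] (x y : R) (ℓ ε : ℤ)
    (hx8 : addOrderOf x = 8) (hy4 : addOrderOf y = 4)
    (hint : ∀ a b : ℤ, a • x = b • y → a • x = 0)
    (hx2 : x ^ 2 = 0) (hy2 : y ^ 2 = 2 * y + (2 * ℓ) • x)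
    (hxy : x * y = (4 * ε) • x) :
    (∀ n : ℕ, (1 + x) ^ n = 1 + n • x) ∧
    orderOf (1 + x) = 8 ∧
    (1 + y - ℓ • x) ^ 2 = 1 ∧
    orderOf (1 + y - ℓ • x) = 2 ∧
    (1 + 2 * y) ^ 2 = 1 ∧
    orderOf (1 + 2 * y) = 2 ∧
    ((fun z => 1 + z) '' ((AddSubgroup.closure ({x, y} : Set R) : AddSubgroup R) : Set R) =
      {r : R | ∃ a b c : ℕ,
        r = (1 + x) ^ a * (1 + y - ℓ • x) ^ b * (1 + 2 * y) ^ c}) ∧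
    ∃ H : Subgroup Rˣ,
      Units.val '' (H : Set Rˣ) =
        (fun z => 1 + z) '' ((AddSubgroup.closure ({x, y} : Set R) : AddSubgroup R) : Set R) ∧
      Nonempty (H ≃* Multiplicative (ZMod 8 × ZMod 2 × ZMod 2)) := by
  -- cast-form hypotheses
  have hy2c : y ^ 2 = 2 * y + 2 * (ℓ : R) * x := by
    rw [hy2, zsmul_eq_mul]; push_cast; ring
  have hxyc : x * y = 4 * (ε : R) * x := by
    rw [hxy, zsmul_eq_mul]; push_cast; ring
  have X8 : (8 : R) * x = 0 := by
    have h := addOrderOf_nsmul_eq_zero x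
    rw [hx8, nsmul_eq_mul] at h; push_cast at h; exact h
  have Y4 : (4 : R) * y = 0 := by
    have h := addOrderOf_nsmul_eq_zero y
    rw [hy4, nsmul_eq_mul] at h; push_cast at h; exact h
  have Xz : ∀ n : ℤ, (8 : ℤ) ∣ n → (n : R) * x = 0 := by
    rintro n ⟨k, rfl⟩; push_cast; linear_combination (k : R) * X8
  have Yz : ∀ n : ℤ, (4 : ℤ) ∣ n → (n : R) * y = 0 := by
    rintro n ⟨k, rfl⟩; push_cast; linear_combination (k : R) * Y4
  have Xnz : ∀ n : ℤ, (n : R) * x = 0 → (8 : ℤ) ∣ n := by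
    intro n h
    have : ((addOrderOf x : ℤ)) ∣ n := by
      rw [addOrderOf_dvd_iff_zsmul_eq_zero, zsmul_eq_mul]; exact h
    rwa [hx8] at this
  have Ynz : ∀ n : ℤ, (n : R) * y = 0 → (4 : ℤ) ∣ n := by
    intro n h
    have : ((addOrderOf y : ℤ)) ∣ n := by
      rw [addOrderOf_dvd_iff_zsmul_eq_zero, zsmul_eq_mul]; exact h
    rwa [hy4] at this
  have hint' : ∀ a b : ℤ, (a : R) * x = (b : R) * y → (a : R) * x = 0 := by
    intro a b h
    have := hint a b (by rw [zsmul_eq_mul, zsmul_eq_mul]; exact h)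
    rwa [zsmul_eq_mul] at this
  have RX : ∀ n m : ℤ, ((n : ZMod 8) = (m : ZMod 8)) → (n : R) * x = (m : R) * x := by
    intro n m h
    have hd : (8 : ℤ) ∣ m - n := by
      have := (ZMod.intCast_eq_intCast_iff n m 8).mp h
      exact_mod_cast this.dvd
    have := Xz _ hd
    push_cast at this
    linear_combination -this
  have RY : ∀ n m : ℤ, ((n : ZMod 4) = (m : ZMod 4)) → (n : R) * y = (m : R) * y := by
    intro n m h
    have hd : (4 : ℤ) ∣ m - n := by
      have := (ZMod.intCast_eq_intCast_iff n m 4).mp h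
      exact_mod_cast this.dvd
    have := Yz _ hd
    push_cast at this
    linear_combination -this
  -- Part 1
  have P1 : ∀ n : ℕ, (1 + x) ^ n = 1 + n • x := by
    intro n
    induction n with
    | zero => simp
    | succ n ih =>
      rw [pow_succ, ih]
      simp only [nsmul_eq_mul]
      push_cast
      linear_combination (n : R) * hx2
  -- basic nonvanishing
  have h4x : (4 : R) * x ≠ 0 := fun h => by have := Xnz 4 (by exact_mod_cast h); omega
  have h2y : (2 : R) * y ≠ 0 := fun h => by have := Ynz 2 (by exact_mod_cast h); omega
  have pow8 : (1 + x) ^ 8 = 1 := by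
    rw [P1, nsmul_eq_mul]; push_cast; rw [X8, add_zero]
  -- Part 2
  have P2 : orderOf (1 + x) = 8 := by
    have hne4 : (1 + x) ^ 4 ≠ 1 := by
      intro h
      rw [P1] at h
      simp only [nsmul_eq_mul] at h
      push_cast at h
      exact h4x (by linear_combination h)
    apply orderOf_eq_of_pow_and_pow_div_prime (by norm_num) pow8
    intro p hp hpd
    have hp2 : p = 2 := by
      have : p ∣ 2 := hp.dvd_of_dvd_pow (show p ∣ 2 ^ 3 by norm_num at hpd ⊢; exact hpd)
      exact (Nat.prime_dvd_prime_iff_eq hp Nat.prime_two).mp this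
    subst hp2
    simpa using hne4
  -- Part 3
  have P3 : (1 + y - ℓ • x) ^ 2 = 1 := by
    rw [zsmul_eq_mul]
    linear_combination hy2c - 2*(ℓ:R)*hxyc + (ℓ:R)^2*hx2 + Y4 - (ℓ:R)*(ε:R)*X8
  -- Part 4
  have hyne : (1 : R) + y - ℓ • x ≠ 1 := by
    intro h
    have hyx : (ℓ : R) * x = (1 : ℤ) • y := by
      rw [zsmul_eq_mul] at h ⊢
      push_cast
      linear_combination -h
    have h0 := hint ℓ 1 (by rw [zsmul_eq_mul]; exact_mod_cast hyx)
    rw [zsmul_eq_mul] at h0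
    have hy0 : y = 0 := by
      rw [zsmul_eq_mul] at hyx
      push_cast at hyx
      linear_combination -hyx + h0
    rw [hy0] at hy4
    simp at hy4
  have P4 : orderOf (1 + y - ℓ • x) = 2 := orderOf_eq_prime P3 hyne
  -- Part 5
  have P5 : (1 + 2 * y) ^ 2 = 1 := by
    linear_combination 4*hy2c + 3*Y4 + (ℓ:R)*X8
  have h2yne : (1 : R) + 2 * y ≠ 1 := by
    intro h
    exact h2y (by linear_combination h)
  have P6 : orderOf (1 + 2 * y) = 2 := orderOf_eq_prime P5 h2yne
  -- K characterization
  have hK : ∀ z : R, z ∈ AddSubgroup.closure ({x, y} : Set R) ↔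
      ∃ a b : ℤ, z = (a : R) * x + (b : R) * y := by
    intro z
    constructor
    · intro hz
      induction hz using AddSubgroup.closure_induction with
      | mem w hw =>
        rcases hw with rfl | rfl
        · exact ⟨1, 0, by push_cast; ring⟩
        · exact ⟨0, 1, by push_cast; ring⟩
      | zero => exact ⟨0, 0, by push_cast; ring⟩
      | add w v _ _ hw hv =>
        obtain ⟨a, b, rfl⟩ := hw
        obtain ⟨c, d, rfl⟩ := hv
        exact ⟨a + c, b + d, by push_cast; ring⟩
      | neg w _ hw =>
        obtain ⟨a, b, rfl⟩ := hw
        exact ⟨-a, -b, by push_cast; ring⟩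
    · rintro ⟨a, b, rfl⟩
      have hx' : x ∈ AddSubgroup.closure ({x, y} : Set R) :=
        AddSubgroup.subset_closure (by left; rfl)
      have hy' : y ∈ AddSubgroup.closure ({x, y} : Set R) :=
        AddSubgroup.subset_closure (by right; rfl)
      have := AddSubgroup.add_mem _ (AddSubgroup.zsmul_mem _ hx' a)
        (AddSubgroup.zsmul_mem _ hy' b)
      simpa [zsmul_eq_mul] using this
  -- product value lemmas
  have G0 : ∀ a : ℕ, (1 + x) ^ a = 1 + ((a : ℤ) : R) * x := by
    intro a; rw [P1]; simp [nsmul_eq_mul]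
  have G1 : ∀ a : ℕ, (1 + x) ^ a * (1 + y - ℓ • x)
      = 1 + (((a : ℤ) * (1 + 4 * ε) - ℓ : ℤ) : R) * x + ((1 : ℤ) : R) * y := by
    intro a
    rw [G0, zsmul_eq_mul]
    push_cast
    linear_combination (a : R) * hxyc - (a : R) * (ℓ : R) * hx2
  have G2 : ∀ a : ℕ, (1 + x) ^ a * (1 + 2 * y)
      = 1 + ((a : ℤ) : R) * x + ((2 : ℤ) : R) * y := by
    intro a
    rw [G0]
    push_cast
    linear_combination 2 * (a : R) * hxyc + (a : R) * (ε : R) * X8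
  have G3 : ∀ a : ℕ, (1 + x) ^ a * ((1 + y - ℓ • x) * (1 + 2 * y))
      = 1 + (((a : ℤ) * (1 + 4 * ε) + 3 * ℓ : ℤ) : R) * x + ((3 : ℤ) : R) * y := by
    intro a
    rw [G0, zsmul_eq_mul]
    push_cast
    linear_combination (2*(a:R)*y + 8*(a:R)*(ε:R) - 2*(ℓ:R) + 3*(a:R)) * hxyc
      + (-(2*(a:R)*(ℓ:R)*y) - (a:R)*(ℓ:R)) * hx2 + 2*hy2c + Y4
      + ((a:R)*(ε:R) + 4*(a:R)*(ε:R)^2 - (ℓ:R)*(ε:R)) * X8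
  -- integer-mod reduction lemmas
  have RX' : ∀ n m : ℤ, (8 : ℤ) ∣ m - n → (n : R) * x = (m : R) * x := by
    intro n m h
    have := Xz _ h
    push_cast at this
    linear_combination -this
  have RY' : ∀ n m : ℤ, (4 : ℤ) ∣ m - n → (n : R) * y = (m : R) * y := by
    intro n m h
    have := Yz _ h
    push_cast at this
    linear_combination -this
  -- Part 7 : the set equality
  have P7 : ((fun z => 1 + z) '' ((AddSubgroup.closure ({x, y} : Set R) : AddSubgroup R) : Set R) =
      {r : R | ∃ a b c : ℕ,
        r = (1 + x) ^ a * (1 + y - ℓ • x) ^ b * (1 + 2 * y) ^ c}) := by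
    ext r
    simp only [Set.mem_image, Set.mem_setOf_eq, SetLike.mem_coe]
    constructor
    · rintro ⟨z, hz, rfl⟩
      obtain ⟨A, B, rfl⟩ := (hK z).mp hz
      have hBc : B % 4 = 0 ∨ B % 4 = 1 ∨ B % 4 = 2 ∨ B % 4 = 3 := by omega
      rcases hBc with hB | hB | hB | hB
      · refine ⟨(A % 8).toNat, 0, 0, ?_⟩
        rw [pow_zero, pow_zero, mul_one, mul_one, G0,
          Int.toNat_of_nonneg (Int.emod_nonneg A (by norm_num))]
        rw [Yz B (by omega), add_zero, RX' A (A % 8) (by omega)]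
      · refine ⟨((A + ℓ) * (1 + 4 * ε) % 8).toNat, 1, 0, ?_⟩
        rw [pow_one, pow_zero, mul_one, G1,
          Int.toNat_of_nonneg (Int.emod_nonneg _ (by norm_num))]
        have hd : (8 : ℤ) ∣ ((A + ℓ) * (1 + 4 * ε) % 8) * (1 + 4 * ε) - ℓ - A := by
          have hk : (A + ℓ) * (1 + 4 * ε) % 8
              = (A + ℓ) * (1 + 4 * ε) - 8 * ((A + ℓ) * (1 + 4 * ε) / 8) :=
            Int.emod_def _ _
          exact ⟨(A + ℓ) * (ε + 2 * ε ^ 2) - ((A + ℓ) * (1 + 4 * ε) / 8) * (1 + 4 * ε),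
            by linear_combination (1 + 4 * ε) * hk⟩
        rw [RY' B 1 (by omega), RX' A _ hd]
        ring
      · refine ⟨(A % 8).toNat, 0, 1, ?_⟩
        rw [pow_zero, pow_one, mul_one, G2,
          Int.toNat_of_nonneg (Int.emod_nonneg A (by norm_num))]
        rw [RY' B 2 (by omega), RX' A (A % 8) (by omega)]
        ring
      · refine ⟨((A - 3 * ℓ) * (1 + 4 * ε) % 8).toNat, 1, 1, ?_⟩
        rw [pow_one, pow_one, mul_assoc, G3,
          Int.toNat_of_nonneg (Int.emod_nonneg _ (by norm_num))]
        have hd : (8 : ℤ) ∣ ((A - 3 * ℓ) * (1 + 4 * ε) % 8) * (1 + 4 * ε) + 3 * ℓ - A := by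
          have hk : (A - 3 * ℓ) * (1 + 4 * ε) % 8
              = (A - 3 * ℓ) * (1 + 4 * ε) - 8 * ((A - 3 * ℓ) * (1 + 4 * ε) / 8) :=
            Int.emod_def _ _
          exact ⟨(A - 3 * ℓ) * (ε + 2 * ε ^ 2) - ((A - 3 * ℓ) * (1 + 4 * ε) / 8) * (1 + 4 * ε),
            by linear_combination (1 + 4 * ε) * hk⟩
        rw [RY' B 3 (by omega), RX' A _ hd]
        ring
    · rintro ⟨a, b, c, rfl⟩
      have Eb := pow_mod_orderOf (1 + y - ℓ • x) b
      rw [P4] at Eb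
      have Ec := pow_mod_orderOf (1 + 2 * y) c
      rw [P6] at Ec
      rw [← Eb, ← Ec]
      rcases Nat.mod_two_eq_zero_or_one b with hb | hb <;>
        rcases Nat.mod_two_eq_zero_or_one c with hc | hc <;> rw [hb, hc]
      · exact ⟨_, (hK _).mpr ⟨(a : ℤ), 0, rfl⟩, by
          rw [pow_zero, pow_zero, mul_one, mul_one, G0]; push_cast; ring⟩
      · exact ⟨_, (hK _).mpr ⟨(a : ℤ), 2, rfl⟩, by
          rw [pow_zero, pow_one, mul_one, G2]; push_cast; ring⟩
      · exact ⟨_, (hK _).mpr ⟨(a : ℤ) * (1 + 4 * ε) - ℓ, 1, rfl⟩, by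
          rw [pow_one, pow_zero, mul_one, G1]; push_cast; ring⟩
      · exact ⟨_, (hK _).mpr ⟨(a : ℤ) * (1 + 4 * ε) + 3 * ℓ, 3, rfl⟩, by
          rw [pow_one, pow_one, mul_assoc, G3]; push_cast; ring⟩
  -- units
  have pe1 : (1 + y - ℓ • x) * (1 + y - ℓ • x) = 1 := by rw [← pow_two]; exact P3
  have pe2 : (1 + 2 * y) * (1 + 2 * y) = 1 := by rw [← pow_two]; exact P5
  set u1 : Rˣ := ⟨1 + x, (1 + x) ^ 7, by rw [← pow_succ']; exact pow8,
    by rw [← pow_succ]; exact pow8⟩ with hu1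
  set u2 : Rˣ := ⟨1 + y - ℓ • x, 1 + y - ℓ • x, pe1, pe1⟩ with hu2
  set u3 : Rˣ := ⟨1 + 2 * y, 1 + 2 * y, pe2, pe2⟩ with hu3
  have hu1v : (u1 : R) = 1 + x := rfl
  have hu2v : (u2 : R) = 1 + y - ℓ • x := rfl
  have hu3v : (u3 : R) = 1 + 2 * y := rfl
  have ho1 : orderOf u1 = 8 := by rw [← orderOf_units, hu1v]; exact P2
  have ho2 : orderOf u2 = 2 := by rw [← orderOf_units, hu2v]; exact P4
  have ho3 : orderOf u3 = 2 := by rw [← orderOf_units, hu3v]; exact P6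
  let f : Multiplicative (ZMod 8 × ZMod 2 × ZMod 2) →* Rˣ :=
  { toFun := fun p => u1 ^ (p.toAdd.1.val) * (u2 ^ (p.toAdd.2.1.val) * u3 ^ (p.toAdd.2.2.val))
    map_one' := by
      show u1 ^ ((0 : ZMod 8).val) * (u2 ^ ((0 : ZMod 2).val) * u3 ^ ((0 : ZMod 2).val)) = 1
      simp
    map_mul' := fun p q => by
      show u1 ^ ((p.toAdd.1 + q.toAdd.1).val) *
          (u2 ^ ((p.toAdd.2.1 + q.toAdd.2.1).val) * u3 ^ ((p.toAdd.2.2 + q.toAdd.2.2).val)) = _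
      rw [aux_pow_val ho1, aux_pow_val ho2, aux_pow_val ho3,
        mul_mul_mul_comm (u2 ^ p.toAdd.2.1.val), mul_mul_mul_comm (u1 ^ p.toAdd.1.val)] }
  have fval : ∀ p : Multiplicative (ZMod 8 × ZMod 2 × ZMod 2),
      ((f p : Rˣ) : R) = (1 + x) ^ (p.toAdd.1.val) *
        ((1 + y - ℓ • x) ^ (p.toAdd.2.1.val) * (1 + 2 * y) ^ (p.toAdd.2.2.val)) := by
    intro p
    show ((u1 ^ (p.toAdd.1.val) * (u2 ^ (p.toAdd.2.1.val) * u3 ^ (p.toAdd.2.2.val)) : Rˣ) : R) = _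
    rw [Units.val_mul, Units.val_mul, Units.val_pow_eq_pow_val, Units.val_pow_eq_pow_val,
      Units.val_pow_eq_pow_val, hu1v, hu2v, hu3v]
  have hinj : Function.Injective f := by
    rw [injective_iff_map_eq_one]
    intro p hp
    have hval := fval p
    rw [hp, Units.val_one] at hval
    have hb2 := ZMod.val_lt p.toAdd.2.1
    have hc2 := ZMod.val_lt p.toAdd.2.2
    have ha8 := ZMod.val_lt p.toAdd.1
    -- analyze
    have key : p.toAdd.1.val = 0 ∧ p.toAdd.2.1.val = 0 ∧ p.toAdd.2.2.val = 0 := by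
      have hb' : p.toAdd.2.1.val = 0 ∨ p.toAdd.2.1.val = 1 := by omega
      have hc' : p.toAdd.2.2.val = 0 ∨ p.toAdd.2.2.val = 1 := by omega
      set av := p.toAdd.1.val
      rcases hb' with hb | hb <;> rcases hc' with hc | hc <;> rw [hb, hc] at hval
      · -- both zero
        rw [pow_zero, pow_zero, mul_one, mul_one, G0] at hval
        have h0 : ((av : ℤ) : R) * x = 0 := by linear_combination -hval
        have := Xnz _ h0
        refine ⟨by omega, hb, hc⟩
      · rw [pow_zero, pow_one, one_mul, G2] at hval
        exfalso
        have hxv : ((av : ℤ) : R) * x = ((-2 : ℤ) : R) * y := by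
          push_cast at hval ⊢
          linear_combination -hval
        have h0 := hint' _ _ hxv
        have hy0 : ((-2 : ℤ) : R) * y = 0 := by rw [← hxv]; exact h0
        have := Ynz _ hy0
        omega
      · rw [pow_one, pow_zero, mul_one, G1] at hval
        exfalso
        have hxv : (((av : ℤ) * (1 + 4 * ε) - ℓ : ℤ) : R) * x = ((-1 : ℤ) : R) * y := by
          push_cast at hval ⊢
          linear_combination -hval
        have h0 := hint' _ _ hxv
        have hy0 : ((-1 : ℤ) : R) * y = 0 := by rw [← hxv]; exact h0
        have := Ynz _ hy0
        omega
      · rw [pow_one, pow_one, G3] at hval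
        exfalso
        have hxv : (((av : ℤ) * (1 + 4 * ε) + 3 * ℓ : ℤ) : R) * x = ((-3 : ℤ) : R) * y := by
          push_cast at hval ⊢
          linear_combination -hval
        have h0 := hint' _ _ hxv
        have hy0 : ((-3 : ℤ) : R) * y = 0 := by rw [← hxv]; exact h0
        have := Ynz _ hy0
        omega
    obtain ⟨h1, h2, h3⟩ := key
    have e1 : p.toAdd.1 = 0 := (ZMod.val_eq_zero _).mp h1
    have e2 : p.toAdd.2.1 = 0 := (ZMod.val_eq_zero _).mp h2
    have e3 : p.toAdd.2.2 = 0 := (ZMod.val_eq_zero _).mp h3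
    have : p.toAdd = 0 := Prod.ext e1 (Prod.ext e2 e3)
    exact toAdd_eq_zero.mp this
  have pw1 : ∀ a : ℕ, (1 + x) ^ ((a : ZMod 8)).val = (1 + x) ^ a := by
    intro a; rw [ZMod.val_natCast, ← P2]; exact pow_mod_orderOf _ _
  have pw2 : ∀ b : ℕ, (1 + y - ℓ • x) ^ ((b : ZMod 2)).val = (1 + y - ℓ • x) ^ b := by
    intro b; rw [ZMod.val_natCast, ← P4]; exact pow_mod_orderOf _ _
  have pw3 : ∀ c : ℕ, (1 + 2 * y) ^ ((c : ZMod 2)).val = (1 + 2 * y) ^ c := by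
    intro c; rw [ZMod.val_natCast, ← P6]; exact pow_mod_orderOf _ _
  have hrange : Units.val '' ((f.range : Subgroup Rˣ) : Set Rˣ) =
      {r : R | ∃ a b c : ℕ, r = (1 + x) ^ a * (1 + y - ℓ • x) ^ b * (1 + 2 * y) ^ c} := by
    ext r
    constructor
    · rintro ⟨u, hu, rfl⟩
      obtain ⟨p, rfl⟩ := hu
      exact ⟨p.toAdd.1.val, p.toAdd.2.1.val, p.toAdd.2.2.val, by rw [fval p, mul_assoc]⟩
    · rintro ⟨a, b, c, rfl⟩
      refine ⟨f (Multiplicative.ofAdd ((a : ZMod 8), (b : ZMod 2), (c : ZMod 2))), ⟨_, rfl⟩, ?_⟩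
      rw [fval]
      show (1 + x) ^ ((a : ZMod 8)).val *
          ((1 + y - ℓ • x) ^ ((b : ZMod 2)).val * (1 + 2 * y) ^ ((c : ZMod 2)).val) = _
      rw [pw1, pw2, pw3, mul_assoc]
  refine ⟨P1, P2, P3, P4, P5, P6, P7, f.range, ?_, ⟨(MonoidHom.ofInjective hinj).symm⟩⟩
  rw [P7]
  exact hrange
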